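/- arXiv:1107.5066 — 2 statements merged into one kernel-verified Lean document; each statement's English description precedes it below -/
import Mathlib

section
/- For the Frail Fighter (u = 0), for every integer k ≥ 2 the ratio t ↦ N(k,t)/N(k−1,t) is non-decreasing on [0,∞); consequently, for every k ≥ 2, t ↦ N*(k,t)/N*(k−1,t) is non-decreasing on (0,∞). -/
open Real MeasureTheory Filter Topology

/-- Auxiliary history-based recursion: `Nhist a u n m t` equals `N(m,t)` when `m ≤ n`. -/
noncomputable def Nhist (a : ℕ → ℝ) (u : ℝ) : ℕ → ℕ → ℝ → ℝ
  | 0, _, _ => 0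
  | n + 1, m, t =>
      if m ≤ n then Nhist a u n m t
      else (Finset.Icc 1 (n + 1)).sup'
          (Finset.nonempty_Icc.mpr (Nat.succ_le_succ (Nat.zero_le n)))
          (fun j => a j + (a j * (1 - u) + u) *
            (Real.exp (-t) * ∫ x in (0:ℝ)..t, Nhist a u n (n + 1 - j) x * Real.exp x))

/-- `Nval a u n t` is `N(n,t)`, the optimal expected number of enemy planes shot down,
with `N(0,t) = 0` and `N(n,t) = max_{1 ≤ j ≤ n} N_n(j,t)`. -/
noncomputable def Nval (a : ℕ → ℝ) (u : ℝ) (n : ℕ) (t : ℝ) : ℝ :=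
  Nhist a u n n t

/-- `Nstar a u r t` is `N*(r,t) = e^{-t} ∫_0^t N(r,x) e^x dx` (so `N*(0,t) = 0`). -/
noncomputable def Nstar (a : ℕ → ℝ) (u : ℝ) (r : ℕ) (t : ℝ) : ℝ :=
  Real.exp (-t) * ∫ x in (0:ℝ)..t, Nval a u r x * Real.exp x

/-- `Nalloc a u n j t` is `N_n(j,t) = a(j) + c(j)·N*(n-j,t)` where `c(j) = a(j)(1-u)+u`. -/
noncomputable def Nalloc (a : ℕ → ℝ) (u : ℝ) (n j : ℕ) (t : ℝ) : ℝ :=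
  a j + (a j * (1 - u) + u) * Nstar a u (n - j) t

/-- `Kopt a u n t = min { j ∈ {1,…,n} : N_n(j,t) = N(n,t) }`. -/
noncomputable def Kopt (a : ℕ → ℝ) (u : ℝ) (n : ℕ) (t : ℝ) : ℕ :=
  sInf {j : ℕ | 1 ≤ j ∧ j ≤ n ∧ Nalloc a u n j t = Nval a u n t}

/-!
With `h n = 1 + N*(n,·)` one has `1 + N(n,·) = 1 + max_j a(j) h (n-j)` and
`h n' = 1 + N(n,·) - h n`.
The core fact is that `h` is totally positive of order two: `h M / h m` is non-decreasing for
`m ≤ M`, i.e. `(1 + N(m)) h M ≤ (1 + N(M)) h m`. This is proved by strong induction on `M` and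
continuous induction in `t`: at a zero of the difference, log-concavity of `a` forces the optimal
first allocations `p` (for `M`) and `q` (for `m`) to satisfy `m - q ≤ M - p`, and the induction
hypothesis for that pair makes the competing difference strictly increasing there.
Monotonicity of `N(k+1)/N(k)` follows by an exchange argument between the optimal allocations at
`(k+1, s)` and `(k, t)`: either `p ≤ q` and total positivity of `h` applies, or `a(q) a(p) ≤
a(q+1) a(p-1)` lets the allocations be swapped. A ratio of integrals `∫₀ᵗ f / ∫₀ᵗ g` inherits the
monotonicity of `f / g`, which gives the statement for `N*`.
-/

open Set

lemma add_le_add_of_antitone_sub {a : ℕ → ℝ} (hconc : Antitone fun n => a (n + 1) - a n)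
    {i j k l : ℕ} (hij : i ≤ j) (hik : i ≤ k) (hsum : i + l = j + k) :
    a i + a l ≤ a j + a k := by
  obtain ⟨d, rfl⟩ : ∃ d, j = i + d := ⟨j - i, by omega⟩
  obtain rfl : l = k + d := by omega
  suffices a (k + d) - a k ≤ a (i + d) - a i by linarith
  induction d with
  | zero => simp
  | succ d ih =>
    have := hconc (show i + d ≤ k + d by omega)
    simp only [← add_assoc] at this ⊢
    linarith [ih (by omega) (by omega)]

lemma mul_le_mul_of_antitone_sub {a : ℕ → ℝ} (ha : ∀ n, 0 ≤ a n) (hmono : Monotone a)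
    (hconc : Antitone fun n => a (n + 1) - a n) {i j k l : ℕ} (hij : i ≤ j) (hik : i ≤ k)
    (hsum : i + l = j + k) : a i * a l ≤ a j * a k := by
  have hjl : a j ≤ a l := hmono (by omega)
  nlinarith [mul_nonneg (ha j) (sub_nonneg.2 (add_le_add_of_antitone_sub hconc hij hik hsum)),
    mul_nonneg (sub_nonneg.2 (hmono hij)) (sub_nonneg.2 hjl)]

lemma mul_lt_mul_of_antitone_sub {a : ℕ → ℝ} (ha : ∀ n, 0 ≤ a n) (hmono : StrictMono a)
    (hconc : Antitone fun n => a (n + 1) - a n) {i j k l : ℕ} (hij : i < j) (hik : i < k)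
    (hsum : i + l = j + k) : a i * a l < a j * a k := by
  have hjl : a j < a l := hmono (by omega)
  nlinarith [mul_nonneg (ha j) (sub_nonneg.2 (add_le_add_of_antitone_sub hconc hij.le hik.le hsum)),
    mul_pos (sub_pos.2 (hmono hij)) (sub_pos.2 hjl)]

lemma le_add_sub_of_forall_le {a g : ℕ → ℝ} (ha : ∀ n, 0 ≤ a n) (hmono : StrictMono a)
    (hconc : Antitone fun n => a (n + 1) - a n) (hg : ∀ r, 0 < g r) {m M p q : ℕ}
    (hmM : m < M) (hp : p ≤ M) (hq : q ∈ Finset.Icc 1 m)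
    (hpmax : ∀ j ∈ Finset.Icc 1 M, a j * g (M - j) ≤ a p * g (M - p))
    (hqmax : ∀ i ∈ Finset.Icc 1 m, a i * g (m - i) ≤ a q * g (m - q)) :
    p ≤ q + (M - m) := by
  rw [Finset.mem_Icc] at hq
  by_contra! hlt
  have h1 := hpmax (q + (M - m)) (Finset.mem_Icc.2 ⟨by omega, by omega⟩)
  have h2 := hqmax (p - (M - m)) (Finset.mem_Icc.2 ⟨by omega, by omega⟩)
  rw [show M - (q + (M - m)) = m - q by omega] at h1
  rw [show m - (p - (M - m)) = M - p by omega] at h2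
  have h12 := mul_le_mul h1 h2 (mul_nonneg (ha _) (hg _).le) (mul_nonneg (ha _) (hg _).le)
  have h3 := mul_lt_mul_of_antitone_sub ha hmono hconc (i := q) (j := q + (M - m))
    (k := p - (M - m)) (l := p) (by omega) (by omega) (by omega)
  nlinarith [mul_lt_mul_of_pos_right h3 (mul_pos (hg (m - q)) (hg (M - p)))]

lemma HasDerivAt.eventually_nhdsGT_pos {f : ℝ → ℝ} {f' x : ℝ} (hf : HasDerivAt f f' x)
    (hx : f x = 0) (hf' : 0 < f') : ∀ᶠ y in 𝓝[>] x, 0 < f y := by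
  have hslope : ∀ᶠ y in 𝓝[>] x, 0 < slope f x y :=
    ((hasDerivAt_iff_tendsto_slope.1 hf).mono_left (nhdsGT_le_nhdsNE x)).eventually
      (lt_mem_nhds hf')
  filter_upwards [hslope, self_mem_nhdsWithin] with y hy hxy
  rw [slope_def_field, hx, sub_zero] at hy
  exact (div_pos_iff_of_pos_right (sub_pos.2 hxy)).1 hy

lemma nonneg_of_forall_eq_zero_eventually_pos {f : ℝ → ℝ} {c x : ℝ} (hf : Continuous f)
    (hc : 0 ≤ f c) (h : ∀ y, c ≤ y → f y = 0 → ∀ᶠ z in 𝓝[>] y, 0 < f z) (hx : c ≤ x) :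
    0 ≤ f x := by
  have hsub : Icc c x ⊆ {y | 0 ≤ f y} := by
    refine IsClosed.Icc_subset_of_forall_mem_nhdsWithin
      ((isClosed_le continuous_const hf).inter isClosed_Icc) hc fun y ⟨hy, hyI⟩ => ?_
    rcases (show 0 ≤ f y from hy).eq_or_lt with hy0 | hy0
    · exact (h y hyI.1 hy0.symm).mono fun z hz => hz.le
    · exact mem_nhdsWithin_of_mem_nhds (mem_of_superset
        ((isOpen_lt continuous_const hf).mem_nhds hy0) fun z (hz : 0 < f z) => hz.le)
  exact hsub ⟨hx, le_rfl⟩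

theorem monotoneOn_integral_div_integral {f g : ℝ → ℝ} {c : ℝ} (hf : Continuous f)
    (hg : Continuous g) (hg0 : ∀ x, c ≤ x → 0 < g x)
    (hfg : MonotoneOn (fun x => f x / g x) (Ici c)) :
    MonotoneOn (fun t => (∫ x in c..t, f x) / ∫ x in c..t, g x) (Ioi c) := by
  intro s (hs : c < s) t (ht : c < t) hst
  have hG : ∀ u, c < u → 0 < ∫ x in c..u, g x := fun u hu =>
    intervalIntegral.intervalIntegral_pos_of_pos_on (hg.intervalIntegrable _ _)
      (fun x hx => hg0 x hx.1.le) hu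
  set r := f s / g s
  have hfr : ∀ x, c ≤ x → x ≤ s → f x ≤ r * g x := fun x hcx hxs =>
    (div_le_iff₀ (hg0 x hcx)).1 (hfg hcx hs.le hxs)
  have hrf : ∀ x, s ≤ x → r * g x ≤ f x := fun x hsx =>
    (le_div_iff₀ (hg0 x (hs.le.trans hsx))).1 (hfg hs.le (hs.le.trans hsx) hsx)
  have hFs : ∫ x in c..s, f x ≤ r * ∫ x in c..s, g x := by
    rw [← intervalIntegral.integral_const_mul]
    exact intervalIntegral.integral_mono_on hs.le (hf.intervalIntegrable _ _)
      ((continuous_const.mul hg).intervalIntegrable _ _) fun x hx => hfr x hx.1 hx.2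
  have hFst : r * ∫ x in s..t, g x ≤ ∫ x in s..t, f x := by
    rw [← intervalIntegral.integral_const_mul]
    exact intervalIntegral.integral_mono_on hst ((continuous_const.mul hg).intervalIntegrable _ _)
      (hf.intervalIntegrable _ _) fun x hx => hrf x hx.1
  have hGst : 0 ≤ ∫ x in s..t, g x :=
    intervalIntegral.integral_nonneg hst fun x hx => (hg0 x (hs.le.trans hx.1)).le
  rw [div_le_div_iff₀ (hG s hs) (hG t ht),
    ← intervalIntegral.integral_add_adjacent_intervals (hf.intervalIntegrable c s)
      (hf.intervalIntegrable s t),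
    ← intervalIntegral.integral_add_adjacent_intervals (hg.intervalIntegrable c s)
      (hg.intervalIntegrable s t)]
  nlinarith [mul_le_mul_of_nonneg_right hFs hGst, mul_le_mul_of_nonneg_left hFst (hG s hs).le]

namespace FrailFighter

variable {a : ℕ → ℝ}

lemma Nhist_eq_Nval (u : ℝ) {n m : ℕ} (hm : m ≤ n) (t : ℝ) :
    Nhist a u n m t = Nval a u m t := by
  induction n with
  | zero =>
    obtain rfl : m = 0 := Nat.le_zero.1 hm
    rfl
  | succ n ih =>
    rcases hm.lt_or_eq with hm | rfl
    · rw [Nhist, if_pos (by omega), ih (by omega)]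
    · rfl

lemma Nval_zero (u t : ℝ) : Nval a u 0 t = 0 := rfl

lemma Nval_succ (n : ℕ) (t : ℝ) :
    Nval a 0 (n + 1) t = (Finset.Icc 1 (n + 1)).sup' (Finset.nonempty_Icc.2 (by omega))
      (fun j => a j * (1 + Nstar a 0 (n + 1 - j) t)) := by
  rw [Nval, Nhist, if_neg (by omega)]
  refine Finset.sup'_congr _ rfl fun j hj => ?_
  have hj : n + 1 - j ≤ n := by simp only [Finset.mem_Icc] at hj; omega
  simp_rw [Nhist_eq_Nval 0 hj, Nstar]
  ring

lemma mul_one_add_Nstar_le_Nval {n j : ℕ} (hj : j ∈ Finset.Icc 1 n) (t : ℝ) :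
    a j * (1 + Nstar a 0 (n - j) t) ≤ Nval a 0 n t := by
  obtain ⟨n, rfl⟩ : ∃ k, n = k + 1 := ⟨n - 1, by simp only [Finset.mem_Icc] at hj; omega⟩
  rw [Nval_succ]
  exact Finset.le_sup' (fun j => a j * (1 + Nstar a 0 (n + 1 - j) t)) hj

lemma exists_Nval_eq {n : ℕ} (hn : 1 ≤ n) (t : ℝ) :
    ∃ p ∈ Finset.Icc 1 n, Nval a 0 n t = a p * (1 + Nstar a 0 (n - p) t) := by
  obtain ⟨n, rfl⟩ : ∃ k, n = k + 1 := ⟨n - 1, by omega⟩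
  rw [Nval_succ]
  exact Finset.exists_mem_eq_sup' _ _

lemma Nstar_zero (u t : ℝ) : Nstar a u 0 t = 0 := by
  simp [Nstar, Nval_zero]

lemma Nstar_apply_zero (u : ℝ) (r : ℕ) : Nstar a u r 0 = 0 := by
  simp [Nstar]

lemma le_Nval {n : ℕ} (hn : 1 ≤ n) (t : ℝ) : a n ≤ Nval a 0 n t := by
  simpa [Nstar_zero] using mul_one_add_Nstar_le_Nval (a := a) (Finset.mem_Icc.2 ⟨hn, le_rfl⟩) t

lemma Nval_nonneg (ha : ∀ n, 0 ≤ a n) (n : ℕ) (t : ℝ) : 0 ≤ Nval a 0 n t := by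
  rcases Nat.eq_zero_or_pos n with rfl | hn
  · exact le_rfl
  · exact (ha n).trans (le_Nval hn t)

lemma Nval_apply_zero (hmono : Monotone a) {n : ℕ} (hn : 1 ≤ n) : Nval a 0 n 0 = a n := by
  obtain ⟨n, rfl⟩ : ∃ k, n = k + 1 := ⟨n - 1, by omega⟩
  refine le_antisymm ?_ (le_Nval hn 0)
  rw [Nval_succ]
  refine Finset.sup'_le _ _ fun j hj => ?_
  simpa [Nstar_apply_zero] using hmono (Finset.mem_Icc.1 hj).2

section ExpAverage

variable {f : ℝ → ℝ}

lemma hasDerivAt_exp_neg_mul_integral (hf : Continuous f) (t : ℝ) :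
    HasDerivAt (fun t => exp (-t) * ∫ x in (0 : ℝ)..t, f x * exp x)
      (f t - exp (-t) * ∫ x in (0 : ℝ)..t, f x * exp x) t := by
  have hint := ((hf.mul continuous_exp).integral_hasStrictDerivAt 0 t).hasDerivAt
  refine (((hasDerivAt_neg t).exp).mul hint).congr_deriv ?_
  simp only [Pi.mul_apply]
  rw [mul_left_comm, ← exp_add, neg_add_cancel, exp_zero]
  ring

lemma exp_neg_mul_integral_const_mul_exp (c t : ℝ) :
    exp (-t) * ∫ x in (0 : ℝ)..t, c * exp x = (1 - exp (-t)) * c := by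
  rw [intervalIntegral.integral_const_mul, integral_exp, exp_zero, exp_neg]
  field_simp

lemma exp_neg_mul_integral_le {c t : ℝ} (hf : Continuous f) (ht : 0 ≤ t)
    (hfc : ∀ x ∈ Icc 0 t, f x ≤ c) :
    exp (-t) * ∫ x in (0 : ℝ)..t, f x * exp x ≤ (1 - exp (-t)) * c := by
  rw [← exp_neg_mul_integral_const_mul_exp]
  gcongr
  exact intervalIntegral.integral_mono_on ht ((hf.mul continuous_exp).intervalIntegrable _ _)
    ((continuous_const.mul continuous_exp).intervalIntegrable _ _)
    fun x hx => by gcongr; exact hfc x hx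

lemma le_exp_neg_mul_integral {c t : ℝ} (hf : Continuous f) (ht : 0 ≤ t)
    (hfc : ∀ x ∈ Icc 0 t, c ≤ f x) :
    (1 - exp (-t)) * c ≤ exp (-t) * ∫ x in (0 : ℝ)..t, f x * exp x := by
  rw [← exp_neg_mul_integral_const_mul_exp]
  gcongr
  exact intervalIntegral.integral_mono_on ht
    ((continuous_const.mul continuous_exp).intervalIntegrable _ _)
    ((hf.mul continuous_exp).intervalIntegrable _ _)
    fun x hx => by gcongr; exact hfc x hx

end ExpAverage

@[fun_prop]
lemma continuous_Nval (n : ℕ) : Continuous (Nval a 0 n) := by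
  induction n using Nat.strong_induction_on with
  | _ n ih =>
    rcases n with _ | n
    · exact continuous_const
    · have hNstar : ∀ j ∈ Finset.Icc 1 (n + 1), Continuous (Nstar a 0 (n + 1 - j)) :=
        fun j hj => continuous_iff_continuousAt.2 fun t =>
          (hasDerivAt_exp_neg_mul_integral (ih _ (by simp only [Finset.mem_Icc] at hj; omega))
            t).continuousAt
      rw [funext (Nval_succ n)]
      exact Continuous.finset_sup'_apply _ fun j hj =>
        continuous_const.mul (continuous_const.add (hNstar j hj))

lemma hasDerivAt_Nstar (n : ℕ) (t : ℝ) :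
    HasDerivAt (Nstar a 0 n) (Nval a 0 n t - Nstar a 0 n t) t :=
  hasDerivAt_exp_neg_mul_integral (continuous_Nval n) t

@[fun_prop]
lemma continuous_Nstar (n : ℕ) : Continuous (Nstar a 0 n) :=
  continuous_iff_continuousAt.2 fun t => (hasDerivAt_Nstar n t).continuousAt

lemma le_Nstar {n : ℕ} (hn : 1 ≤ n) {t : ℝ} (ht : 0 ≤ t) :
    (1 - exp (-t)) * a n ≤ Nstar a 0 n t :=
  le_exp_neg_mul_integral (continuous_Nval n) ht fun x _ => le_Nval hn x

lemma Nstar_nonneg (ha : ∀ n, 0 ≤ a n) (n : ℕ) {t : ℝ} (ht : 0 ≤ t) : 0 ≤ Nstar a 0 n t := by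
  simpa [Nstar] using le_exp_neg_mul_integral (continuous_Nval n) ht fun x _ => Nval_nonneg ha n x

lemma one_add_Nstar_pos (ha : ∀ n, 0 ≤ a n) (n : ℕ) {t : ℝ} (ht : 0 ≤ t) :
    0 < 1 + Nstar a 0 n t := by
  linarith [Nstar_nonneg ha n ht]

lemma Nstar_le_of_monotoneOn {n : ℕ} (hN : MonotoneOn (Nval a 0 n) (Ici 0)) {t : ℝ}
    (ht : 0 ≤ t) : Nstar a 0 n t ≤ (1 - exp (-t)) * Nval a 0 n t :=
  exp_neg_mul_integral_le (continuous_Nval n) ht fun _ hx => hN hx.1 ht hx.2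

lemma monotoneOn_Nstar_of_monotoneOn (ha : ∀ n, 0 ≤ a n) {n : ℕ}
    (hN : MonotoneOn (Nval a 0 n) (Ici 0)) : MonotoneOn (Nstar a 0 n) (Ici 0) := by
  refine monotoneOn_of_hasDerivWithinAt_nonneg (convex_Ici 0) (continuous_Nstar n).continuousOn
    (fun t _ => (hasDerivAt_Nstar n t).hasDerivWithinAt) fun t ht => ?_
  rw [interior_Ici] at ht
  have := Nstar_le_of_monotoneOn hN (le_of_lt ht)
  nlinarith [Nval_nonneg ha n t, exp_pos (-t)]

lemma monotoneOn_Nval (ha : ∀ n, 0 ≤ a n) (n : ℕ) : MonotoneOn (Nval a 0 n) (Ici 0) := by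
  induction n using Nat.strong_induction_on with
  | _ n ih =>
    rcases n with _ | n
    · exact monotoneOn_const
    · intro s hs t ht hst
      rw [Nval_succ, Nval_succ]
      refine Finset.sup'_mono_fun fun j hj => ?_
      have hlt : n + 1 - j < n + 1 := by simp only [Finset.mem_Icc] at hj; omega
      gcongr
      · exact ha j
      · exact monotoneOn_Nstar_of_monotoneOn ha (ih _ hlt) hs ht hst

lemma Nstar_le (ha : ∀ n, 0 ≤ a n) (n : ℕ) {t : ℝ} (ht : 0 ≤ t) :
    Nstar a 0 n t ≤ (1 - exp (-t)) * Nval a 0 n t :=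
  Nstar_le_of_monotoneOn (monotoneOn_Nval ha n) ht

lemma Nstar_le_Nval (ha : ∀ n, 0 ≤ a n) (n : ℕ) {t : ℝ} (ht : 0 ≤ t) :
    Nstar a 0 n t ≤ Nval a 0 n t := by
  nlinarith [Nstar_le ha n ht, Nval_nonneg ha n t, exp_pos (-t)]

lemma Nval_pos (ha : ∀ n, 0 ≤ a n) (hmono : StrictMono a) {n : ℕ} (hn : 1 ≤ n) (t : ℝ) :
    0 < Nval a 0 n t :=
  ((ha 0).trans_lt (hmono hn)).trans_le (le_Nval hn t)

lemma Nstar_lt_Nval (ha : ∀ n, 0 ≤ a n) (hmono : StrictMono a) {n : ℕ} (hn : 1 ≤ n) {t : ℝ}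
    (ht : 0 ≤ t) : Nstar a 0 n t < Nval a 0 n t := by
  nlinarith [Nstar_le ha n ht, exp_pos (-t), Nval_pos ha hmono hn t]

section TotalPositivity

variable (ha : ∀ n, 0 ≤ a n) (hmono : StrictMono a) (hconc : Antitone fun n => a (n + 1) - a n)
include ha hmono

lemma one_add_Nval_mul_lt_of_Nval_eq {m M : ℕ} (hm : 1 ≤ m) (hmM : m < M) {t : ℝ} (ht : 0 ≤ t)
    (hNm : Nval a 0 m t = a m) (hNM : Nval a 0 M t = a M) :
    (1 + Nval a 0 m t) * (1 + Nstar a 0 M t) < (1 + Nval a 0 M t) * (1 + Nstar a 0 m t) := by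
  have hM := Nstar_le ha M ht
  have hm' := le_Nstar (a := a) hm ht
  rw [hNM] at hM ⊢
  rw [hNm]
  nlinarith [mul_le_mul_of_nonneg_left hM (by linarith [ha m] : (0 : ℝ) ≤ 1 + a m),
    mul_le_mul_of_nonneg_left hm' (by linarith [ha M] : (0 : ℝ) ≤ 1 + a M),
    mul_pos (sub_pos.2 (hmono hmM)) (exp_pos (-t))]

include hconc

lemma argmax_le_of_eq_zero {m M p q : ℕ} (hmM : m < M) {t₀ : ℝ} (ht₀ : 0 ≤ t₀)
    (hzero : (1 + Nval a 0 m t₀) * (1 + Nstar a 0 M t₀) =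
      (1 + Nval a 0 M t₀) * (1 + Nstar a 0 m t₀))
    (hp : p ∈ Finset.Icc 1 M) (hNp : Nval a 0 M t₀ = a p * (1 + Nstar a 0 (M - p) t₀))
    (hq : q ∈ Finset.Icc 1 m) (hNq : Nval a 0 m t₀ = a q * (1 + Nstar a 0 (m - q) t₀)) :
    p < M ∧ p ≤ q + (M - m) := by
  have hpq : p ≤ q + (M - m) :=
    le_add_sub_of_forall_le ha hmono hconc (fun r => one_add_Nstar_pos ha r ht₀) hmM
      (Finset.mem_Icc.1 hp).2 hq (fun j hj => hNp ▸ mul_one_add_Nstar_le_Nval hj t₀)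
      fun i hi => hNq ▸ mul_one_add_Nstar_le_Nval hi t₀
  refine ⟨(Finset.mem_Icc.1 hp).2.lt_of_ne fun hpM => hzero.not_lt ?_, hpq⟩
  obtain rfl : q = m := by rw [Finset.mem_Icc] at hq; omega
  subst hpM
  exact one_add_Nval_mul_lt_of_Nval_eq ha hmono (Finset.mem_Icc.1 hq).1 hmM ht₀
    (by simpa [Nstar_zero] using hNq) (by simpa [Nstar_zero] using hNp)

lemma eventually_pos_of_argmax {m M p q : ℕ} (hmM : m < M)
    (IH : ∀ M' < M, ∀ m' ≤ M', ∀ t, 0 ≤ t → (1 + Nval a 0 m' t) * (1 + Nstar a 0 M' t) ≤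
      (1 + Nval a 0 M' t) * (1 + Nstar a 0 m' t))
    {t₀ : ℝ} (ht₀ : 0 ≤ t₀)
    (hzero : (1 + Nval a 0 m t₀) * (1 + Nstar a 0 M t₀) =
      (1 + Nval a 0 M t₀) * (1 + Nstar a 0 m t₀))
    (hp : p ∈ Finset.Icc 1 M) (hNp : Nval a 0 M t₀ = a p * (1 + Nstar a 0 (M - p) t₀))
    (hq : q ∈ Finset.Icc 1 m) (hNq : Nval a 0 m t₀ = a q * (1 + Nstar a 0 (m - q) t₀)) :
    ∀ᶠ t in 𝓝[>] t₀, 0 < (1 + a p * (1 + Nstar a 0 (M - p) t)) * (1 + Nstar a 0 m t) -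
      (1 + a q * (1 + Nstar a 0 (m - q) t)) * (1 + Nstar a 0 M t) := by
  obtain ⟨hpM, hpq⟩ := argmax_le_of_eq_zero ha hmono hconc hmM ht₀ hzero hp hNp hq hNq
  rw [Finset.mem_Icc] at hp hq
  -- the candidate `q + (M - m)` for `M` beats `q` for `m`, since `a` is strictly increasing
  have hlt : a q * (1 + Nstar a 0 (m - q) t₀) < a p * (1 + Nstar a 0 (M - p) t₀) := by
    have h := hNp ▸ mul_one_add_Nstar_le_Nval (a := a)
      (Finset.mem_Icc.2 (⟨by omega, by omega⟩ : 1 ≤ q + (M - m) ∧ q + (M - m) ≤ M)) t₀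
    rw [show M - (q + (M - m)) = m - q by omega] at h
    nlinarith [hmono (show q < q + (M - m) by omega), one_add_Nstar_pos ha (m - q) ht₀]
  have hIH := IH (M - p) (by omega) (m - q) (by omega) t₀ ht₀
  have hx₁ := Nstar_lt_Nval ha hmono (show 1 ≤ M - p by omega) ht₀
  have hderiv :=
    ((((hasDerivAt_Nstar (a := a) (M - p) t₀).const_add 1).const_mul (a p)).const_add 1).mul
    ((hasDerivAt_Nstar (a := a) m t₀).const_add 1) |>.sub
    (((((hasDerivAt_Nstar (a := a) (m - q) t₀).const_add 1).const_mul (a q)).const_add 1).mul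
    ((hasDerivAt_Nstar (a := a) M t₀).const_add 1))
  refine hderiv.eventually_nhdsGT_pos ?_ ?_
  · simp only [Pi.sub_apply, Pi.mul_apply]
    rw [← hNp, ← hNq]
    linarith
  rw [← hNp, ← hNq]
  set x₁ := Nval a 0 (M - p) t₀ - Nstar a 0 (M - p) t₀
  set x₂ := Nval a 0 (m - q) t₀ - Nstar a 0 (m - q) t₀
  have hx : x₂ * (1 + Nstar a 0 (M - p) t₀) ≤ x₁ * (1 + Nstar a 0 (m - q) t₀) := by
    linarith
  have hqp : a q * x₂ < a p * x₁ := by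
    have hg := one_add_Nstar_pos ha (M - p) ht₀
    refine lt_of_mul_lt_mul_right ?_ hg.le
    nlinarith [mul_le_mul_of_nonneg_left hx (ha q), mul_lt_mul_of_pos_right hlt (sub_pos.2 hx₁)]
  have hkey : a q * x₂ * (1 + Nval a 0 M t₀) < a p * x₁ * (1 + Nval a 0 m t₀) := by
    rw [hNp, hNq]
    nlinarith [mul_le_mul_of_nonneg_left hx (mul_nonneg (ha p) (ha q))]
  have hP : 0 < 1 + Nval a 0 M t₀ := by linarith [Nval_nonneg ha M t₀]
  refine pos_of_mul_pos_right (a := 1 + Nval a 0 M t₀) ?_ hP.le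
  have hrw : (1 + Nval a 0 M t₀) * (a p * x₁ * (1 + Nstar a 0 m t₀) +
      (1 + Nval a 0 M t₀) * (Nval a 0 m t₀ - Nstar a 0 m t₀) -
      (a q * x₂ * (1 + Nstar a 0 M t₀) + (1 + Nval a 0 m t₀) * (Nval a 0 M t₀ - Nstar a 0 M t₀))) =
      (1 + Nstar a 0 M t₀) * (a p * x₁ * (1 + Nval a 0 m t₀) - a q * x₂ * (1 + Nval a 0 M t₀)) := by
    -- the terms carrying the derivatives of `1 + N*(m)` and `1 + N*(M)` cancel at a zero
    linear_combination (1 + Nval a 0 M t₀ - a p * x₁) * hzero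
  rw [hrw]
  exact mul_pos (one_add_Nstar_pos ha M ht₀) (sub_pos.2 hkey)

lemma eventually_pos_of_eq_zero {m M : ℕ} (hm : 1 ≤ m) (hmM : m < M)
    (IH : ∀ M' < M, ∀ m' ≤ M', ∀ t, 0 ≤ t → (1 + Nval a 0 m' t) * (1 + Nstar a 0 M' t) ≤
      (1 + Nval a 0 M' t) * (1 + Nstar a 0 m' t))
    {t₀ : ℝ} (ht₀ : 0 ≤ t₀)
    (hzero : (1 + Nval a 0 m t₀) * (1 + Nstar a 0 M t₀) =
      (1 + Nval a 0 M t₀) * (1 + Nstar a 0 m t₀)) :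
    ∀ᶠ t in 𝓝[>] t₀, 0 < (1 + Nval a 0 M t) * (1 + Nstar a 0 m t) -
      (1 + Nval a 0 m t) * (1 + Nstar a 0 M t) := by
  obtain ⟨p, hp, hNp⟩ := exists_Nval_eq (a := a) (by omega : 1 ≤ M) t₀
  have hcand : ∀ q ∈ Finset.Icc 1 m, ∀ᶠ t in 𝓝[>] t₀,
      0 < (1 + a p * (1 + Nstar a 0 (M - p) t)) * (1 + Nstar a 0 m t) -
        (1 + a q * (1 + Nstar a 0 (m - q) t)) * (1 + Nstar a 0 M t) := by
    intro q hq
    rcases (mul_one_add_Nstar_le_Nval hq t₀).lt_or_eq with hlt | hNq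
    · have hpos : 0 < (1 + a p * (1 + Nstar a 0 (M - p) t₀)) * (1 + Nstar a 0 m t₀) -
          (1 + a q * (1 + Nstar a 0 (m - q) t₀)) * (1 + Nstar a 0 M t₀) := by
        rw [← hNp]
        nlinarith [one_add_Nstar_pos ha M ht₀]
      have hcont : Continuous fun t => (1 + a p * (1 + Nstar a 0 (M - p) t)) *
          (1 + Nstar a 0 m t) - (1 + a q * (1 + Nstar a 0 (m - q) t)) * (1 + Nstar a 0 M t) := by
        fun_prop
      exact nhdsWithin_le_nhds (hcont.continuousAt.eventually (lt_mem_nhds hpos))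
    · exact eventually_pos_of_argmax ha hmono hconc hmM IH ht₀ hzero hp hNp hq hNq.symm
  filter_upwards [(Finset.eventually_all _).2 hcand, self_mem_nhdsWithin] with t hpos ht
  have ht : 0 ≤ t := ht₀.trans (le_of_lt ht)
  obtain ⟨q, hq, hNq⟩ := exists_Nval_eq (a := a) hm t
  rw [hNq]
  nlinarith [hpos q hq, mul_le_mul_of_nonneg_right (mul_one_add_Nstar_le_Nval (a := a) hp t)
    (one_add_Nstar_pos ha m ht).le]

theorem one_add_Nval_mul_le {m M : ℕ} (hmM : m ≤ M) {t : ℝ} (ht : 0 ≤ t) :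
    (1 + Nval a 0 m t) * (1 + Nstar a 0 M t) ≤ (1 + Nval a 0 M t) * (1 + Nstar a 0 m t) := by
  induction M using Nat.strong_induction_on generalizing m t with
  | _ M IH =>
  rcases hmM.eq_or_lt with rfl | hmM
  · exact le_rfl
  rcases Nat.eq_zero_or_pos m with rfl | hm
  · simpa [Nval_zero, Nstar_zero] using Nstar_le_Nval ha M ht
  have hΘ := nonneg_of_forall_eq_zero_eventually_pos (c := 0)
    (f := fun t => (1 + Nval a 0 M t) * (1 + Nstar a 0 m t) -
      (1 + Nval a 0 m t) * (1 + Nstar a 0 M t))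
    (by fun_prop) ?_ (fun t₀ ht₀ hzero => eventually_pos_of_eq_zero ha hmono hconc hm hmM
      (fun M' hM' m' hm' t ht => IH M' hM' hm' ht) ht₀ (by linarith [hzero])) ht
  · linarith [hΘ]
  · simp only [Nval_apply_zero hmono.monotone hm, Nval_apply_zero hmono.monotone (by omega : 1 ≤ M),
      Nstar_apply_zero]
    linarith [hmono hmM]

theorem monotoneOn_one_add_Nstar_div {m M : ℕ} (hmM : m ≤ M) :
    MonotoneOn (fun t => (1 + Nstar a 0 M t) / (1 + Nstar a 0 m t)) (Ici 0) := by
  have hne : ∀ t ∈ Ici (0 : ℝ), 1 + Nstar a 0 m t ≠ 0 := fun t ht =>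
    (one_add_Nstar_pos ha m ht).ne'
  refine monotoneOn_of_hasDerivWithinAt_nonneg (convex_Ici 0)
    (by fun_prop (disch := exact hne _ ‹_›))
    (fun t ht => ((((hasDerivAt_Nstar M t).const_add 1).div ((hasDerivAt_Nstar m t).const_add 1)
      (hne t (interior_subset ht))).hasDerivWithinAt)) fun t ht => ?_
  rw [interior_Ici] at ht
  refine div_nonneg ?_ (sq_nonneg _)
  linarith [one_add_Nval_mul_le ha hmono hconc hmM (le_of_lt ht)]

lemma one_add_Nstar_mul_le {m M : ℕ} (hmM : m ≤ M) {s t : ℝ} (hs : 0 ≤ s) (hst : s ≤ t) :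
    (1 + Nstar a 0 M s) * (1 + Nstar a 0 m t) ≤ (1 + Nstar a 0 M t) * (1 + Nstar a 0 m s) := by
  have := monotoneOn_one_add_Nstar_div ha hmono hconc hmM hs (hs.trans hst) hst
  rwa [div_le_div_iff₀ (one_add_Nstar_pos ha m hs) (one_add_Nstar_pos ha m (hs.trans hst))] at this

lemma Nval_succ_mul_le {k : ℕ} (hk : 1 ≤ k) {s t : ℝ} (hs : 0 ≤ s) (hst : s ≤ t) :
    Nval a 0 (k + 1) s * Nval a 0 k t ≤ Nval a 0 (k + 1) t * Nval a 0 k s := by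
  obtain ⟨p, hp, hNp⟩ := exists_Nval_eq (a := a) (by omega : 1 ≤ k + 1) s
  obtain ⟨q, hq, hNq⟩ := exists_Nval_eq (a := a) hk t
  rw [Finset.mem_Icc] at hp hq
  obtain ⟨j, hj, i, hi, hle⟩ : ∃ j ∈ Finset.Icc 1 (k + 1), ∃ i ∈ Finset.Icc 1 k,
      Nval a 0 (k + 1) s * Nval a 0 k t ≤
        a j * (1 + Nstar a 0 (k + 1 - j) t) * (a i * (1 + Nstar a 0 (k - i) s)) := by
    rw [hNp, hNq]
    rcases le_or_gt p q with hpq | hqp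
    · refine ⟨p, Finset.mem_Icc.2 hp, q, Finset.mem_Icc.2 hq, ?_⟩
      nlinarith [mul_le_mul_of_nonneg_left
        (one_add_Nstar_mul_le ha hmono hconc (show k - q ≤ k + 1 - p by omega) hs hst)
        (mul_nonneg (ha p) (ha q))]
    · refine ⟨q + 1, Finset.mem_Icc.2 ⟨by omega, by omega⟩,
        p - 1, Finset.mem_Icc.2 ⟨by omega, by omega⟩, ?_⟩
      rw [show k + 1 - (q + 1) = k - q by omega, show k - (p - 1) = k + 1 - p by omega]
      nlinarith [mul_le_mul_of_nonneg_right
        (mul_le_mul_of_antitone_sub ha hmono.monotone hconc (i := q) (j := q + 1) (k := p - 1)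
          (l := p) (by omega) (by omega) (by omega))
        (mul_pos (one_add_Nstar_pos ha (k + 1 - p) hs)
          (one_add_Nstar_pos ha (k - q) (hs.trans hst))).le]
  exact hle.trans (mul_le_mul (mul_one_add_Nstar_le_Nval hj t) (mul_one_add_Nstar_le_Nval hi s)
    (mul_nonneg (ha i) (one_add_Nstar_pos ha _ hs).le) (Nval_nonneg ha _ _))

theorem monotoneOn_Nval_succ_div {k : ℕ} (hk : 1 ≤ k) :
    MonotoneOn (fun t => Nval a 0 (k + 1) t / Nval a 0 k t) (Ici 0) := by
  intro s (hs : 0 ≤ s) t _ hst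
  rw [div_le_div_iff₀ (Nval_pos ha hmono hk s) (Nval_pos ha hmono hk t)]
  exact Nval_succ_mul_le ha hmono hconc hk hs hst

end TotalPositivity

end FrailFighter

theorem frail_ratio_monotone_general
    (a : ℕ → ℝ) (ha0 : a 0 = 0)
    (hmono : StrictMono a)
    (hconc : ∀ j : ℕ, a (j + 2) - a (j + 1) < a (j + 1) - a j) :
    (∀ k : ℕ, 2 ≤ k →
      MonotoneOn (fun t => Nval a 0 k t / Nval a 0 (k - 1) t) (Set.Ici (0:ℝ))) ∧
    (∀ k : ℕ, 2 ≤ k →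
      MonotoneOn (fun t => Nstar a 0 k t / Nstar a 0 (k - 1) t) (Set.Ioi (0:ℝ))) := by
  have ha : ∀ n, 0 ≤ a n := fun n => ha0 ▸ hmono.monotone n.zero_le
  have hconc' : Antitone fun n => a (n + 1) - a n :=
    antitone_nat_of_succ_le fun n => (hconc n).le
  have hN : ∀ k : ℕ, 2 ≤ k →
      MonotoneOn (fun t => Nval a 0 k t / Nval a 0 (k - 1) t) (Ici 0) := by
    intro k hk
    obtain ⟨k, rfl⟩ : ∃ j, k = j + 1 + 1 := ⟨k - 2, by omega⟩
    exact FrailFighter.monotoneOn_Nval_succ_div ha hmono hconc' (by omega)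
  refine ⟨hN, fun k hk => ?_⟩
  have hpos : ∀ x, 0 ≤ x → 0 < Nval a 0 (k - 1) x * exp x := fun x _ =>
    mul_pos (FrailFighter.Nval_pos ha hmono (by omega) x) (exp_pos x)
  refine (monotoneOn_integral_div_integral (f := fun x => Nval a 0 k x * exp x)
    (by fun_prop) (by fun_prop) hpos
    ((hN k hk).congr fun x _ => ?_)).congr fun t _ => ?_
  · exact (mul_div_mul_right _ _ (exp_pos x).ne').symm
  · exact (mul_div_mul_left _ _ (exp_pos (-t)).ne').symm

/-- For the Frail Fighter (`u = 0`), for every `k ≥ 2` the ratio `t ↦ N(k,t)/N(k-1,t)`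
is non-decreasing on `[0,∞)`; consequently `t ↦ N*(k,t)/N*(k-1,t)` is non-decreasing
on `(0,∞)`. -/
theorem frail_ratio_monotone
    (a : ℕ → ℝ) (haI : ∀ j, a j ∈ Set.Icc (0:ℝ) 1) (ha0 : a 0 = 0)
    (hmono : StrictMono a)
    (hconc : ∀ j : ℕ, a (j + 2) - a (j + 1) < a (j + 1) - a j) :
    (∀ k : ℕ, 2 ≤ k →
      MonotoneOn (fun t => Nval a 0 k t / Nval a 0 (k - 1) t) (Set.Ici (0:ℝ))) ∧
    (∀ k : ℕ, 2 ≤ k →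
      MonotoneOn (fun t => Nstar a 0 k t / Nstar a 0 (k - 1) t) (Set.Ioi (0:ℝ))) :=
  frail_ratio_monotone_general a ha0 hmono hconc
end

section
/- Property [B] fails for the Frail Fighter: for u = 0 and a(j) = 1 − (1/2)^j, there exists t > 0 (in fact, every t > 2.694…, the unique solution of (3/4)[17/8 − e^{−t}(5/4 + (3/8)(t − log(3/2)))] = (7/8)[1 + (3/4)(1 − e^{−t})]) such that K(4,t) = 3 and K(5,t) = 2; in particular K(5,t) < K(4,t). -/
open Real MeasureTheory Filter Topology

/-!
With `a(j) = 1 - 2^{-j}` and `u = 0` the first values are explicit: `N(1) = 1/2`, `N(2) = 3/4` and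
`N(3,x) = max (9/8 - (3/8)e^{-x}) (7/8)`, whose branches cross at `x = log(3/2)`; integrating
gives `N*(3,t)` in closed form for `t ≥ log(3/2)`. For `n = 4` this makes `j = 3` the unique
maximiser once `t > log(3/2)`. For `n = 5` the contest between `j = 2` and `j = 3` is decided by
the sign of `critGap`, which is negative on `[0, log(3/2)]` and strictly increasing afterwards,
hence has a unique positive zero `tc`. Beyond `tc`, `j = 2` wins: `j = 1` loses already against
the crude bound `N(4) ≤ 21/16`, and `j = 4, 5` lose because `e^{-t} < 2/3`.
-/

open Finset

section General

variable {a : ℕ → ℝ} {u : ℝ}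

lemma Nhist_eq_Nval {n m : ℕ} (hm : m ≤ n) (t : ℝ) : Nhist a u n m t = Nval a u m t := by
  induction n generalizing m with
  | zero =>
    obtain rfl : m = 0 := by omega
    rfl
  | succ n ih =>
    rcases hm.lt_or_eq with h | rfl
    · rw [Nhist, if_pos (by omega), ih (by omega)]
    · rfl

lemma Nval_zero (t : ℝ) : Nval a u 0 t = 0 := rfl

lemma Nval_succ (n : ℕ) (t : ℝ) :
    Nval a u (n + 1) t =
      (Icc 1 (n + 1)).sup' (nonempty_Icc.mpr (by omega)) fun j => Nalloc a u (n + 1) j t := by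
  rw [Nval, Nhist, if_neg (by omega)]
  refine sup'_congr _ rfl fun j hj => ?_
  simp only [Nalloc, Nstar, Nhist_eq_Nval (show n + 1 - j ≤ n by have := mem_Icc.mp hj; omega)]

lemma Nstar_zero (t : ℝ) : Nstar a u 0 t = 0 := by
  simp [Nstar, Nval_zero]

lemma continuous_Nstar {r : ℕ} (hr : Continuous (Nval a u r)) : Continuous (Nstar a u r) :=
  (continuous_exp.comp continuous_neg).mul
    (intervalIntegral.continuous_primitive
      (fun _ _ => (hr.mul continuous_exp).intervalIntegrable _ _) 0)

lemma continuous_Nval (n : ℕ) : Continuous (Nval a u n) := by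
  induction n using Nat.strong_induction_on with
  | _ n ih =>
    rcases n with _ | n
    · exact continuous_const
    · rw [show Nval a u (n + 1) = _ from funext (Nval_succ n)]
      refine Continuous.finset_sup'_apply _ fun j hj => ?_
      exact continuous_const.add
        (continuous_const.mul (continuous_Nstar (ih _ (by have := mem_Icc.mp hj; omega))))

lemma exp_neg_mul_integral_const_mul_exp (c t : ℝ) :
    exp (-t) * ∫ x in (0 : ℝ)..t, c * exp x = c * (1 - exp (-t)) := by
  rw [intervalIntegral.integral_const_mul, integral_exp, exp_zero, exp_neg]
  field_simp [exp_ne_zero]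

lemma Nstar_eq_of_Nval_eq {r : ℕ} {c : ℝ} (h : ∀ x, Nval a u r x = c) (t : ℝ) :
    Nstar a u r t = c * (1 - exp (-t)) := by
  simp only [Nstar, h, exp_neg_mul_integral_const_mul_exp]

lemma Nstar_le_of_Nval_le {r : ℕ} {c t : ℝ} (h : ∀ x, 0 ≤ x → Nval a u r x ≤ c)
    (ht : 0 ≤ t) :
    Nstar a u r t ≤ c * (1 - exp (-t)) := by
  rw [← exp_neg_mul_integral_const_mul_exp, Nstar]
  refine mul_le_mul_of_nonneg_left
    (intervalIntegral.integral_mono_on ht ?_ ?_ fun x hx => ?_) (exp_pos _).le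
  · exact ((continuous_Nval r).mul continuous_exp).intervalIntegrable _ _
  · exact (continuous_const.mul continuous_exp).intervalIntegrable _ _
  · exact mul_le_mul_of_nonneg_right (h x hx.1) (exp_pos x).le

lemma Nalloc_le_Nval_succ {n j : ℕ} (h1 : 1 ≤ j) (h2 : j ≤ n + 1) (t : ℝ) :
    Nalloc a u (n + 1) j t ≤ Nval a u (n + 1) t := by
  rw [Nval_succ]
  exact le_sup' (fun j => Nalloc a u (n + 1) j t) (mem_Icc.mpr ⟨h1, h2⟩)

lemma Nval_succ_le {n : ℕ} {t c : ℝ}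
    (h : ∀ j, 1 ≤ j → j ≤ n + 1 → Nalloc a u (n + 1) j t ≤ c) :
    Nval a u (n + 1) t ≤ c := by
  rw [Nval_succ]
  exact sup'_le _ _ fun j hj => h j (mem_Icc.mp hj).1 (mem_Icc.mp hj).2

lemma Nval_succ_eq_Nalloc {n j₀ : ℕ} {t : ℝ} (h1 : 1 ≤ j₀) (h2 : j₀ ≤ n + 1)
    (h : ∀ j, 1 ≤ j → j ≤ n + 1 → Nalloc a u (n + 1) j t ≤ Nalloc a u (n + 1) j₀ t) :
    Nval a u (n + 1) t = Nalloc a u (n + 1) j₀ t :=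
  (Nval_succ_le h).antisymm (Nalloc_le_Nval_succ h1 h2 t)

lemma Kopt_eq_of_forall_lt {n j₀ : ℕ} {t : ℝ} (h1 : 1 ≤ j₀) (h2 : j₀ ≤ n + 1)
    (h : ∀ j, 1 ≤ j → j ≤ n + 1 → j ≠ j₀ →
      Nalloc a u (n + 1) j t < Nalloc a u (n + 1) j₀ t) :
    Kopt a u (n + 1) t = j₀ := by
  have hN : Nval a u (n + 1) t = Nalloc a u (n + 1) j₀ t := by
    refine Nval_succ_eq_Nalloc h1 h2 fun j hj1 hj2 => ?_
    rcases eq_or_ne j j₀ with rfl | hne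
    exacts [le_rfl, (h j hj1 hj2 hne).le]
  have hset :
      {j | 1 ≤ j ∧ j ≤ n + 1 ∧ Nalloc a u (n + 1) j t = Nval a u (n + 1) t} = {j₀} := by
    ext j
    simp only [Set.mem_ofPred_eq, Set.mem_singleton_iff, hN]
    refine ⟨fun ⟨hj1, hj2, hj⟩ => by_contra fun hne => (h j hj1 hj2 hne).ne hj, ?_⟩
    rintro rfl
    exact ⟨h1, h2, rfl⟩
  rw [Kopt, hset, csInf_singleton]

lemma Nalloc_frail (n j : ℕ) (t : ℝ) : Nalloc a 0 n j t = a j * (1 + Nstar a 0 (n - j) t) := by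
  simp only [Nalloc]
  ring

end General

noncomputable def hitProb (j : ℕ) : ℝ := 1 - (1 / 2) ^ j

lemma Nalloc_hitProb (n j : ℕ) (t : ℝ) :
    Nalloc hitProb 0 n j t = (1 - (1 / 2) ^ j) * (1 + Nstar hitProb 0 (n - j) t) :=
  Nalloc_frail n j t

lemma exp_neg_log_three_halves : exp (-log (3 / 2)) = 2 / 3 := by
  rw [exp_neg, exp_log (by norm_num)]
  norm_num

lemma exp_neg_lt_two_thirds_iff {t : ℝ} : exp (-t) < 2 / 3 ↔ log (3 / 2) < t := by
  rw [← exp_neg_log_three_halves, exp_lt_exp, neg_lt_neg_iff]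

lemma exp_neg_le_two_thirds_iff {t : ℝ} : exp (-t) ≤ 2 / 3 ↔ log (3 / 2) ≤ t := by
  rw [← exp_neg_log_three_halves, exp_le_exp, neg_le_neg_iff]

lemma two_thirds_le_exp_neg_iff {t : ℝ} : 2 / 3 ≤ exp (-t) ↔ t ≤ log (3 / 2) := by
  rw [← exp_neg_log_three_halves, exp_le_exp, neg_le_neg_iff]

lemma Nval_hitProb_one (t : ℝ) : Nval hitProb 0 1 t = 1 / 2 := by
  rw [Nval_succ_eq_Nalloc (n := 0) le_rfl le_rfl fun j h1 h2 => by interval_cases j; rfl,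
    Nalloc_hitProb]
  norm_num [Nstar_zero]

lemma Nstar_hitProb_one (t : ℝ) : Nstar hitProb 0 1 t = 1 / 2 * (1 - exp (-t)) :=
  Nstar_eq_of_Nval_eq Nval_hitProb_one t

lemma Nval_hitProb_two (t : ℝ) : Nval hitProb 0 2 t = 3 / 4 := by
  rw [Nval_succ_eq_Nalloc (n := 1) (j₀ := 2) (by norm_num) le_rfl fun j h1 h2 => ?_,
    Nalloc_hitProb]
  · norm_num [Nstar_zero]
  · have := exp_pos (-t)
    interval_cases j <;> norm_num [Nalloc_hitProb, Nstar_zero, Nstar_hitProb_one]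
    linarith

lemma Nstar_hitProb_two (t : ℝ) : Nstar hitProb 0 2 t = 3 / 4 * (1 - exp (-t)) :=
  Nstar_eq_of_Nval_eq Nval_hitProb_two t

lemma Nval_hitProb_three (x : ℝ) :
    Nval hitProb 0 3 x = max (9 / 8 - 3 / 8 * exp (-x)) (7 / 8) := by
  have he := exp_pos (-x)
  have hN (j : ℕ) (h1 : 1 ≤ j) (h2 : j ≤ 3) :=
    Nalloc_le_Nval_succ (a := hitProb) (u := 0) h1 h2 x
  refine le_antisymm (Nval_succ_le fun j h1 h2 => ?_) (max_le ?_ ?_)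
  · interval_cases j <;>
      norm_num [Nalloc_hitProb, Nstar_zero, Nstar_hitProb_one, Nstar_hitProb_two]
    all_goals left; linarith
  · have := hN 2 (by norm_num) (by norm_num)
    norm_num [Nalloc_hitProb, Nstar_hitProb_one] at this
    linarith
  · have := hN 3 (by norm_num) le_rfl
    norm_num [Nalloc_hitProb, Nstar_zero] at this
    linarith

lemma integral_Nval_hitProb_three_mul_exp_log :
    ∫ x in (0 : ℝ)..log (3 / 2), Nval hitProb 0 3 x * exp x = 7 / 16 := by
  have hL : 0 ≤ log (3 / 2 : ℝ) := log_nonneg (by norm_num)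
  have heq : Set.EqOn (fun x => Nval hitProb 0 3 x * exp x) (fun x => 7 / 8 * exp x)
      (Set.uIcc 0 (log (3 / 2))) := fun x hx => by
    rw [Set.uIcc_of_le hL] at hx
    have := two_thirds_le_exp_neg_iff.2 hx.2
    simp only [Nval_hitProb_three, max_eq_right (by linarith : 9 / 8 - 3 / 8 * exp (-x) ≤ 7 / 8)]
  rw [intervalIntegral.integral_congr heq, intervalIntegral.integral_const_mul, integral_exp,
    exp_zero, exp_log (by norm_num)]
  norm_num

lemma integral_Nval_hitProb_three_mul_exp_of_log_le {t : ℝ} (ht : log (3 / 2) ≤ t) :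
    ∫ x in log (3 / 2)..t, Nval hitProb 0 3 x * exp x
      = 9 / 8 * (exp t - 3 / 2) - 3 / 8 * (t - log (3 / 2)) := by
  have heq : Set.EqOn (fun x => Nval hitProb 0 3 x * exp x) (fun x => 9 / 8 * exp x - 3 / 8)
      (Set.uIcc (log (3 / 2)) t) := fun x hx => by
    rw [Set.uIcc_of_le ht] at hx
    have := exp_neg_le_two_thirds_iff.2 hx.1
    simp only [Nval_hitProb_three, max_eq_left (by linarith : 7 / 8 ≤ 9 / 8 - 3 / 8 * exp (-x))]
    rw [exp_neg]
    field_simp [exp_ne_zero]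
  rw [intervalIntegral.integral_congr heq,
    intervalIntegral.integral_sub (f := fun x => 9 / 8 * exp x)
      ((continuous_const.mul continuous_exp).intervalIntegrable _ _) intervalIntegrable_const,
    intervalIntegral.integral_const_mul, integral_exp, intervalIntegral.integral_const,
    exp_log (by norm_num), smul_eq_mul]
  ring

lemma Nstar_hitProb_three {t : ℝ} (ht : log (3 / 2) ≤ t) :
    Nstar hitProb 0 3 t = 9 / 8 - exp (-t) * (5 / 4 + 3 / 8 * (t - log (3 / 2))) := by
  have hint (x y : ℝ) : IntervalIntegrable (fun x => Nval hitProb 0 3 x * exp x) volume x y :=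
    ((continuous_Nval 3).mul continuous_exp).intervalIntegrable x y
  rw [Nstar, ← intervalIntegral.integral_add_adjacent_intervals (hint 0 (log (3 / 2))) (hint _ t),
    integral_Nval_hitProb_three_mul_exp_log, integral_Nval_hitProb_three_mul_exp_of_log_le ht,
    exp_neg]
  field_simp [exp_ne_zero]
  ring

lemma Nval_hitProb_three_le (x : ℝ) : Nval hitProb 0 3 x ≤ 9 / 8 := by
  rw [Nval_hitProb_three]
  exact max_le (by linarith [exp_pos (-x)]) (by norm_num)

lemma Nval_hitProb_four_le {x : ℝ} (hx : 0 ≤ x) : Nval hitProb 0 4 x ≤ 21 / 16 := by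
  have he := exp_pos (-x)
  have h3 := Nstar_le_of_Nval_le (fun y _ => Nval_hitProb_three_le y) hx
  refine Nval_succ_le fun j h1 h2 => ?_
  interval_cases j <;>
    norm_num [Nalloc_hitProb, Nstar_zero, Nstar_hitProb_one, Nstar_hitProb_two] <;>
    nlinarith

-- `N_5(2,t) - N_5(3,t)` for `t ≥ log (3/2)`; the equation in the theorem reads `critGap t = 0`.
noncomputable def critGap (t : ℝ) : ℝ := 1 / 16 - 9 / 32 * exp (-t) * (1 + t - log (3 / 2))

lemma hasDerivAt_critGap (t : ℝ) :
    HasDerivAt critGap (9 / 32 * exp (-t) * (t - log (3 / 2))) t := by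
  have hf : critGap = fun s => 1 / 16 - 9 / 32 * (exp (-s) * (1 + s - log (3 / 2))) := by
    funext s; unfold critGap; ring
  rw [hf]
  exact ((((hasDerivAt_neg t).exp).mul (((hasDerivAt_id' t).const_add 1).sub_const _)).const_mul
    _).const_sub _ |>.congr_deriv (by ring)

lemma continuous_critGap : Continuous critGap := by
  unfold critGap; fun_prop

lemma critGap_strictMonoOn : StrictMonoOn critGap (Set.Ici (log (3 / 2))) := by
  refine strictMonoOn_of_deriv_pos (convex_Ici _) continuous_critGap.continuousOn fun x hx => ?_
  rw [interior_Ici, Set.mem_Ioi] at hx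
  rw [(hasDerivAt_critGap x).deriv]
  have := exp_pos (-x)
  have : 0 < x - log (3 / 2) := by linarith
  positivity

lemma log_three_halves_le_half : log (3 / 2 : ℝ) ≤ 1 / 2 := by
  linarith [log_le_sub_one_of_pos (by norm_num : (0 : ℝ) < 3 / 2)]

lemma critGap_neg {t : ℝ} (h0 : 0 ≤ t) (hL : t ≤ log (3 / 2)) : critGap t < 0 := by
  have he := two_thirds_le_exp_neg_iff.2 hL
  have := log_three_halves_le_half
  unfold critGap
  nlinarith

lemma critGap_three_pos : 0 < critGap 3 := by
  have h18 : 18 < exp 3 := by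
    have := exp_one_gt_d9
    rw [show (3 : ℝ) = 1 + 1 + 1 by norm_num, exp_add, exp_add]
    nlinarith
  have he : exp (-3) < 1 / 18 := by
    rw [exp_neg, one_div]
    gcongr
  have := log_pos (by norm_num : (1 : ℝ) < 3 / 2)
  unfold critGap
  nlinarith [exp_pos (-3)]

lemma exists_critGap_eq_zero : ∃ tc, log (3 / 2) < tc ∧ critGap tc = 0 := by
  have hL0 : 0 ≤ log (3 / 2 : ℝ) := log_nonneg (by norm_num)
  have hL3 : log (3 / 2 : ℝ) ≤ 3 := by linarith [log_three_halves_le_half]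
  obtain ⟨tc, htc, h0⟩ := intermediate_value_Icc hL3 continuous_critGap.continuousOn
    ⟨(critGap_neg hL0 le_rfl).le, critGap_three_pos.le⟩
  refine ⟨tc, htc.1.lt_of_ne ?_, h0⟩
  rintro rfl
  exact (critGap_neg hL0 le_rfl).ne h0

lemma Kopt_hitProb_four {t : ℝ} (ht : log (3 / 2) < t) : Kopt hitProb 0 4 t = 3 := by
  have he := exp_neg_lt_two_thirds_iff.2 ht
  have hp : 0 ≤ exp (-t) * (t - log (3 / 2)) := mul_nonneg (exp_pos _).le (by linarith)
  refine Kopt_eq_of_forall_lt (n := 3) (by norm_num) (by norm_num) fun j _ _ hne => ?_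
  rcases (by omega : j = 1 ∨ j = 2 ∨ j = 4) with rfl | rfl | rfl <;>
    norm_num [Nalloc_hitProb, Nstar_zero, Nstar_hitProb_one, Nstar_hitProb_two,
      Nstar_hitProb_three ht.le] <;>
    nlinarith [exp_pos (-t)]

lemma Kopt_hitProb_five {t : ℝ} (ht : log (3 / 2) < t) (hgap : 0 < critGap t) :
    Kopt hitProb 0 5 t = 2 := by
  have he := exp_neg_lt_two_thirds_iff.2 ht
  have hp : 0 ≤ exp (-t) * (t - log (3 / 2)) := mul_nonneg (exp_pos _).le (by linarith)
  have h4 := Nstar_le_of_Nval_le (fun x hx => Nval_hitProb_four_le hx)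
    ((log_nonneg (by norm_num)).trans ht.le)
  unfold critGap at hgap
  refine Kopt_eq_of_forall_lt (n := 4) (by norm_num) (by norm_num) fun j _ _ hne => ?_
  rcases (by omega : j = 1 ∨ j = 3 ∨ j = 4 ∨ j = 5) with rfl | rfl | rfl | rfl <;>
    norm_num [Nalloc_hitProb, Nstar_zero, Nstar_hitProb_one, Nstar_hitProb_two,
      Nstar_hitProb_three ht.le] <;>
    nlinarith [exp_pos (-t)]

/-- Assertion 5.1 ([B] fails for the Frail Fighter): for `u = 0` and `a(j) = 1 - (1/2)^j`,
there is a unique `tc > 0` solving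
`(3/4)[17/8 - e^{-t}(5/4 + (3/8)(t - log(3/2)))] = (7/8)[1 + (3/4)(1 - e^{-t})]`
(numerically `tc = 2.694…`), and for every `t > tc` one has `K(4,t) = 3` and
`K(5,t) = 2`; in particular `K(5,t) < K(4,t)`. -/
theorem frail_B_fails :
    ∃ tc : ℝ, 0 < tc ∧
      (3/4 : ℝ) * (17/8 - Real.exp (-tc) * (5/4 + (3/8) * (tc - Real.log (3/2))))
        = (7/8) * (1 + (3/4) * (1 - Real.exp (-tc))) ∧
      (∀ t : ℝ, 0 < t →
        (3/4 : ℝ) * (17/8 - Real.exp (-t) * (5/4 + (3/8) * (t - Real.log (3/2))))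
          = (7/8) * (1 + (3/4) * (1 - Real.exp (-t))) → t = tc) ∧
      ∀ t : ℝ, tc < t →
        Kopt (fun j => 1 - (1/2 : ℝ) ^ j) 0 4 t = 3 ∧
        Kopt (fun j => 1 - (1/2 : ℝ) ^ j) 0 5 t = 2 ∧
        Kopt (fun j => 1 - (1/2 : ℝ) ^ j) 0 5 t < Kopt (fun j => 1 - (1/2 : ℝ) ^ j) 0 4 t := by
  have hcrit (t : ℝ) : (3/4 : ℝ) * (17/8 - exp (-t) * (5/4 + (3/8) * (t - log (3/2))))
      = (7/8) * (1 + (3/4) * (1 - exp (-t))) ↔ critGap t = 0 := by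
    unfold critGap
    constructor <;> intro h <;> linear_combination h
  obtain ⟨tc, hL, h0⟩ := exists_critGap_eq_zero
  refine ⟨tc, (log_pos (by norm_num)).trans hL, (hcrit tc).2 h0, fun t ht heq => ?_,
    fun t ht => ?_⟩
  · rcases le_or_gt t (log (3 / 2)) with htL | htL
    · exact absurd ((hcrit t).1 heq) (critGap_neg ht.le htL).ne
    · exact critGap_strictMonoOn.injOn htL.le hL.le (((hcrit t).1 heq).trans h0.symm)
  · have hgap : 0 < critGap t := h0 ▸ critGap_strictMonoOn hL.le (hL.trans ht).le ht
    have h4 : Kopt hitProb 0 4 t = 3 := Kopt_hitProb_four (hL.trans ht)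
    have h5 : Kopt hitProb 0 5 t = 2 := Kopt_hitProb_five (hL.trans ht) hgap
    exact ⟨h4, h5, h5 ▸ h4 ▸ by norm_num⟩
end
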